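/- Let A be a complex unital Banach algebra and let a ∈ A have a Moore-Penrose inverse a†. Then the following statements are equivalent: (i) a is EP; (ii) there exists s ∈ A with s⁻¹(0) = 0 and a† = sa; (iii) there exist s₁, s₂ ∈ A with a† = s₁a and a = s₂a†; (iv) there exists u ∈ A with uA = A and a† = au; (v) there exist u₁, u₂ ∈ A with a† = au₁ and a = a†u₂; (vi) there exists t ∈ A with t₋₁(0) = 0 and a† = at; (vii) there exists x ∈ A with Ax = A and a† = xa. -/

import Mathlib

noncomputable section

/-- An element `h` of a complex normed algebra is *hermitian* if `‖exp (i t h)‖ = 1`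
for all real `t`. -/
def IsHermitianElem {A : Type*} [NormedRing A] [NormedAlgebra ℂ A] (h : A) : Prop :=
  ∀ t : ℝ, ‖NormedSpace.exp ((Complex.I * (t : ℂ)) • h)‖ = 1

/-- `x` is a Moore–Penrose inverse of `a`: `axa = a`, `xax = x`, and `ax`, `xa` are hermitian. -/
def IsMPInv {A : Type*} [NormedRing A] [NormedAlgebra ℂ A] (a x : A) : Prop :=
  a * x * a = a ∧ x * a * x = x ∧ IsHermitianElem (a * x) ∧ IsHermitianElem (x * a)

/-!
A Moore–Penrose inverse `b` of `a` makes `p = ab` and `q = ba` hermitian idempotents. The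
factorisations in (ii), (iii), (vii) force `pq = p, qp = q`, those in (iv), (v), (vi) force
`pq = q, qp = p`. Either way `p - q` squares to zero and one of the products `(1 - 2p)(1 - 2q)`,
`(1 - 2q)(1 - 2p)` equals `1 + 2(p - q)`. Since `exp (iπ p) = 1 - 2p`, that product has norm at
most `1`, so its powers `1 + 2k(p - q)` stay bounded, which forces `p = q`. Conversely, when
`ab = ba` the element `g = b² + 1 - ba` is invertible, with inverse `a² + 1 - ba`, and
`b = ga = ag`, which gives all the one-sided factorisations at once.
-/

section Ring

variable {R : Type*} [Ring R] {a b : R}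

theorem setOf_mul_eq_zero_eq_singleton_iff_isLeftRegular {s : R} :
    {x : R | s * x = 0} = {0} ↔ IsLeftRegular s := by
  simp [isLeftRegular_iff_right_eq_zero_of_mul, Set.eq_singleton_iff_unique_mem]

theorem setOf_mul_eq_zero_eq_singleton_iff_isRightRegular {t : R} :
    {x : R | x * t = 0} = {0} ↔ IsRightRegular t := by
  simp [isRightRegular_iff_left_eq_zero_of_mul, Set.eq_singleton_iff_unique_mem]

theorem setOf_eq_mul_eq_univ_iff_exists_right_inv {u : R} :
    {y : R | ∃ x, y = u * x} = Set.univ ↔ ∃ v, u * v = 1 := by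
  refine ⟨fun h ↦ ?_, fun ⟨v, hv⟩ ↦ Set.eq_univ_of_forall fun y ↦ ⟨v * y, ?_⟩⟩
  · obtain ⟨v, hv⟩ : 1 ∈ {y : R | ∃ x, y = u * x} := h ▸ Set.mem_univ 1
    exact ⟨v, hv.symm⟩
  · rw [← mul_assoc, hv, one_mul]

theorem setOf_eq_mul_eq_univ_iff_exists_left_inv {x : R} :
    {y : R | ∃ z, y = z * x} = Set.univ ↔ ∃ v, v * x = 1 := by
  refine ⟨fun h ↦ ?_, fun ⟨v, hv⟩ ↦ Set.eq_univ_of_forall fun y ↦ ⟨y * v, ?_⟩⟩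
  · obtain ⟨v, hv⟩ : 1 ∈ {y : R | ∃ z, y = z * x} := h ▸ Set.mem_univ 1
    exact ⟨v, hv.symm⟩
  · rw [mul_assoc, hv, mul_one]

theorem mul_mul_eq_of_eq_mul_left (h : a * b * a = a) {s x : R} (hx : x = s * a) :
    x * (b * a) = x := by
  rw [hx, mul_assoc, ← mul_assoc a, h]

theorem mul_mul_eq_of_eq_mul_right (h : a * b * a = a) {s x : R} (hx : x = a * s) :
    a * b * x = x := by
  rw [hx, ← mul_assoc, h]

theorem eq_mul_mul_of_isLeftRegular (h : b * a * b = b) {s : R} (hs : IsLeftRegular s)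
    (hb : b = s * a) : a = a * a * b :=
  hs (show s * a = s * (a * a * b) by simp only [← mul_assoc]; rw [← hb, h])

theorem eq_mul_mul_of_isRightRegular (h : b * a * b = b) {t : R} (ht : IsRightRegular t)
    (hb : b = a * t) : a = b * (a * a) :=
  ht (show a * t = b * (a * a) * t by simp only [mul_assoc]; rw [← hb, ← mul_assoc, h])

theorem exists_unit_mul_eq_and_mul_eq_of_commute (h1 : a * b * a = a) (h2 : b * a * b = b)
    (hc : a * b = b * a) : ∃ g : Rˣ, ↑g * a = b ∧ a * ↑g = b := by
  have hab (x : R) : a * (b * x) = b * (a * x) := by rw [← mul_assoc, hc, mul_assoc]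
  have hbaa (x : R) : b * (a * (a * x)) = a * x := by
    rw [← hab, ← mul_assoc, ← mul_assoc, h1]
  have hbaa' : b * (a * a) = a := by simpa using hbaa 1
  have hbba : b * (b * a) = b := by rw [← hc, ← mul_assoc, h2]
  let g : Rˣ :=
    { val := b * b + 1 - b * a
      inv := a * a + 1 - b * a
      val_inv := by
        simp only [mul_add, add_mul, mul_sub, sub_mul, mul_assoc, one_mul, mul_one, hab, hbaa,
          hbaa', hbba]
        abel
      inv_val := by
        simp only [mul_add, add_mul, mul_sub, sub_mul, mul_assoc, one_mul, mul_one, hc, hab,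
          hbaa', hbba]
        abel }
  refine ⟨g, ?_, ?_⟩
  · simp only [g, add_mul, sub_mul, mul_assoc, one_mul, hbaa', hbba]
    abel
  · simp only [g, mul_add, mul_sub, mul_one, ← mul_assoc, h1]
    rw [hc, h2]
    abel

end Ring

section Normed

open NormedSpace Nat

variable {A : Type*} [NormedRing A] [NormedAlgebra ℂ A]

theorem NormedSpace.exp_smul_of_isIdempotentElem (z : ℂ) {p : A} (hp : IsIdempotentElem p) :
    exp (z • p) = 1 + (Complex.exp z - 1) • p := by
  have hterm (n : ℕ) : ((n ! : ℂ)⁻¹) • (z • p) ^ n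
      = ((n ! : ℂ)⁻¹ * z ^ n) • p + Pi.single (M := fun _ ↦ A) 0 (1 - p) n := by
    cases n with
    | zero => simp
    | succ n => simp [smul_pow, hp.pow_succ_eq, smul_smul]
  have hsum :
      HasSum (fun n : ℕ ↦ ((n ! : ℂ)⁻¹) • (z • p) ^ n) (1 + (Complex.exp z - 1) • p) := by
    have hz := exp_series_hasSum_exp' (𝕂 := ℂ) z
    rw [← Complex.exp_eq_exp_ℂ] at hz
    convert (hz.smul_const p).add (hasSum_pi_single 0 (1 - p)) using 1
    · exact funext hterm
    · simp only [sub_smul, one_smul]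
      abel
  rw [exp_eq_tsum ℂ]
  exact hsum.tsum_eq

theorem eq_zero_of_mul_self_eq_zero_of_norm_one_add_le_one {n : A} (hn : n * n = 0)
    (h : ‖1 + n‖ ≤ 1) : n = 0 := by
  have hpow (k : ℕ) : (1 + n) ^ k = 1 + k • n := by
    induction k with
    | zero => simp
    | succ k ih =>
      rw [pow_succ, ih, succ_nsmul]
      simp only [add_mul, mul_add, one_mul, mul_one, smul_mul_assoc, hn, smul_zero]
      abel
  have hbound (k : ℕ) : (k + 1) • ‖n‖ ≤ 1 + ‖(1 : A)‖ := by
    rw [← RCLike.norm_nsmul ℂ, show (k + 1) • n = (1 + n) ^ (k + 1) - 1 by rw [hpow]; abel]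
    calc ‖(1 + n) ^ (k + 1) - 1‖ ≤ ‖(1 + n) ^ (k + 1)‖ + ‖(1 : A)‖ := norm_sub_le _ _
      _ ≤ ‖1 + n‖ ^ (k + 1) + ‖(1 : A)‖ := by gcongr; exact norm_pow_le' _ k.succ_pos
      _ ≤ 1 + ‖(1 : A)‖ := by gcongr; exact pow_le_one₀ (norm_nonneg _) h
  by_contra hne
  obtain ⟨k, hk⟩ := Archimedean.arch (2 + ‖(1 : A)‖) (norm_pos_iff.mpr hne)
  cases k with
  | zero => rw [zero_nsmul] at hk; linarith [norm_nonneg (1 : A)]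
  | succ k => linarith [hbound k]

theorem IsHermitianElem.norm_one_sub_two_smul {p : A} (hp : IsHermitianElem p)
    (hpi : IsIdempotentElem p) : ‖1 - (2 : ℂ) • p‖ = 1 := by
  have h := hp Real.pi
  rwa [exp_smul_of_isIdempotentElem _ hpi, mul_comm, Complex.exp_pi_mul_I,
    show (-1 - 1 : ℂ) = -2 by norm_num, neg_smul, ← sub_eq_add_neg] at h

theorem IsHermitianElem.norm_mul_one_sub_two_smul_le {p q : A} (hp : IsHermitianElem p)
    (hq : IsHermitianElem q) (hpi : IsIdempotentElem p) (hqi : IsIdempotentElem q) :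
    ‖(1 - (2 : ℂ) • p) * (1 - (2 : ℂ) • q)‖ ≤ 1 :=
  (norm_mul_le _ _).trans_eq <| by
    rw [hp.norm_one_sub_two_smul hpi, hq.norm_one_sub_two_smul hqi, one_mul]

theorem eq_of_mul_self_sub_eq_zero_of_norm_le {p q : A} (hsq : (p - q) * (p - q) = 0)
    (h : ‖1 + (2 : ℂ) • (p - q)‖ ≤ 1) : p = q := by
  have := eq_zero_of_mul_self_eq_zero_of_norm_one_add_le_one
    (by rw [smul_mul_smul, hsq, smul_zero]) h
  rwa [smul_eq_zero, sub_eq_zero, or_iff_right two_ne_zero] at this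

theorem IsHermitianElem.eq_of_mul_eq_left {p q : A} (hp : IsHermitianElem p)
    (hq : IsHermitianElem q) (hpi : IsIdempotentElem p) (hqi : IsIdempotentElem q)
    (hpq : p * q = p) (hqp : q * p = q) : p = q := by
  refine eq_of_mul_self_sub_eq_zero_of_norm_le ?_ ?_
  · rw [sub_mul, mul_sub, mul_sub, hpi.eq, hqi.eq, hpq, hqp]
    abel
  · convert hp.norm_mul_one_sub_two_smul_le hq hpi hqi using 2
    simp only [mul_sub, sub_mul, mul_one, one_mul, smul_mul_smul, hpq]
    module

theorem IsHermitianElem.eq_of_mul_eq_right {p q : A} (hp : IsHermitianElem p)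
    (hq : IsHermitianElem q) (hpi : IsIdempotentElem p) (hqi : IsIdempotentElem q)
    (hpq : p * q = q) (hqp : q * p = p) : p = q := by
  refine eq_of_mul_self_sub_eq_zero_of_norm_le ?_ ?_
  · rw [sub_mul, mul_sub, mul_sub, hpi.eq, hqi.eq, hpq, hqp]
    abel
  · convert hq.norm_mul_one_sub_two_smul_le hp hqi hpi using 2
    simp only [mul_sub, sub_mul, mul_one, one_mul, smul_mul_smul, hqp]
    module

end Normed

namespace IsMPInv

variable {A : Type*} [NormedRing A] [NormedAlgebra ℂ A] {a b : A}

theorem isIdempotentElem_mul_left (h : IsMPInv a b) : IsIdempotentElem (a * b) := by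
  rw [IsIdempotentElem, ← mul_assoc, h.1]

theorem isIdempotentElem_mul_right (h : IsMPInv a b) : IsIdempotentElem (b * a) := by
  rw [IsIdempotentElem, ← mul_assoc, h.2.1]

theorem commute_of_eq_mul_left (h : IsMPInv a b) {s₁ s₂ : A} (hb : b = s₁ * a)
    (ha : a = s₂ * b) : a * b = b * a := by
  refine h.2.2.1.eq_of_mul_eq_left h.2.2.2 h.isIdempotentElem_mul_left
    h.isIdempotentElem_mul_right ?_ ?_
  · rw [mul_assoc, mul_mul_eq_of_eq_mul_left h.1 hb]
  · rw [mul_assoc, mul_mul_eq_of_eq_mul_left h.2.1 ha]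

theorem commute_of_eq_mul_right (h : IsMPInv a b) {u₁ u₂ : A} (hb : b = a * u₁)
    (ha : a = b * u₂) : a * b = b * a := by
  refine h.2.2.1.eq_of_mul_eq_right h.2.2.2 h.isIdempotentElem_mul_left
    h.isIdempotentElem_mul_right ?_ ?_
  · rw [← mul_assoc, mul_mul_eq_of_eq_mul_right h.1 hb]
  · rw [← mul_assoc, mul_mul_eq_of_eq_mul_right h.2.1 ha]

end IsMPInv

theorem ep_tfae_dagger_eq_sa_general {A : Type*} [NormedRing A] [NormedAlgebra ℂ A]
    (a ad : A) (had : IsMPInv a ad) :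
    List.TFAE
      [a * ad = ad * a,
       ∃ s : A, {x : A | s * x = 0} = {0} ∧ ad = s * a,
       ∃ s₁ s₂ : A, ad = s₁ * a ∧ a = s₂ * ad,
       ∃ u : A, {y : A | ∃ x, y = u * x} = Set.univ ∧ ad = a * u,
       ∃ u₁ u₂ : A, ad = a * u₁ ∧ a = ad * u₂,
       ∃ t : A, {x : A | x * t = 0} = {0} ∧ ad = a * t,
       ∃ x : A, {y : A | ∃ z, y = z * x} = Set.univ ∧ ad = x * a] := by
  simp only [setOf_mul_eq_zero_eq_singleton_iff_isLeftRegular,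
    setOf_mul_eq_zero_eq_singleton_iff_isRightRegular, setOf_eq_mul_eq_univ_iff_exists_right_inv,
    setOf_eq_mul_eq_univ_iff_exists_left_inv]
  tfae_have 1 → 7 := fun hc ↦
    have ⟨g, hga, _⟩ := exists_unit_mul_eq_and_mul_eq_of_commute had.1 had.2.1 hc
    ⟨g, ⟨↑g⁻¹, g.inv_mul⟩, hga.symm⟩
  tfae_have 7 → 2 := fun ⟨x, ⟨v, hv⟩, hb⟩ ↦ ⟨x, isLeftRegular_of_mul_eq_one hv, hb⟩
  tfae_have 2 → 3 := fun ⟨s, hs, hb⟩ ↦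
    ⟨s, a * a, hb, eq_mul_mul_of_isLeftRegular had.2.1 hs hb⟩
  tfae_have 3 → 1 := fun ⟨_, _, hb, ha⟩ ↦ had.commute_of_eq_mul_left hb ha
  tfae_have 1 → 4 := fun hc ↦
    have ⟨g, _, hag⟩ := exists_unit_mul_eq_and_mul_eq_of_commute had.1 had.2.1 hc
    ⟨g, ⟨↑g⁻¹, g.mul_inv⟩, hag.symm⟩
  tfae_have 4 → 6 := fun ⟨u, ⟨v, hv⟩, hb⟩ ↦ ⟨u, isRightRegular_of_mul_eq_one hv, hb⟩
  tfae_have 6 → 5 := fun ⟨t, ht, hb⟩ ↦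
    ⟨t, a * a, hb, eq_mul_mul_of_isRightRegular had.2.1 ht hb⟩
  tfae_have 5 → 1 := fun ⟨_, _, hb, ha⟩ ↦ had.commute_of_eq_mul_right hb ha
  tfae_finish

/-- For `a` with Moore–Penrose inverse `a†` in a Banach algebra: `a` is EP iff `a† = sa`
with `s⁻¹(0) = 0`, iff `a† = s₁a` and `a = s₂a†`, iff `a† = au` with `uA = A`, iff
`a† = au₁` and `a = a†u₂`, iff `a† = at` with `t₋₁(0) = 0`, iff `a† = xa` with `Ax = A`. -/
theorem ep_tfae_dagger_eq_sa {A : Type*} [NormedRing A] [NormedAlgebra ℂ A] [CompleteSpace A]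
    (a ad : A) (had : IsMPInv a ad) :
    List.TFAE
      [a * ad = ad * a,
       ∃ s : A, {x : A | s * x = 0} = {0} ∧ ad = s * a,
       ∃ s₁ s₂ : A, ad = s₁ * a ∧ a = s₂ * ad,
       ∃ u : A, {y : A | ∃ x, y = u * x} = Set.univ ∧ ad = a * u,
       ∃ u₁ u₂ : A, ad = a * u₁ ∧ a = ad * u₂,
       ∃ t : A, {x : A | x * t = 0} = {0} ∧ ad = a * t,
       ∃ x : A, {y : A | ∃ z, y = z * x} = Set.univ ∧ ad = x * a] :=
  ep_tfae_dagger_eq_sa_general a ad had
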